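/- For all n ≥ 0, w_{n+1} = y · v_{-1} v_0 v_1 ⋯ v_{n-1}, where y is the first letter of w_{n+1} (i.e., y = a if n+1 odd, y = b if n+1 even), and the product denotes concatenation of the adjoining singular words v_j for j = -1, 0, …, n-1. -/

import Mathlib

/-!
Every `s N` with `N ≥ -1` ends in the letter `b` for odd `N` and `a` for even `N`, which is
exactly the letter prepended to `v (N - 1)`. Hence dropping the last letter of
`s (N + 1) = s N · s N ^ (d (N + 1) - 1) · s (N - 1)` gives
`(s (N + 1)).dropLast = (s N).dropLast · v (N - 1)`, and telescoping from `(s 0).dropLast = ε`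
writes `(s (n + 1)).dropLast` as `v (-1) ⋯ v (n - 1)`.
-/

/-- Letters: `a` is `false`, `b` is `true`. -/
abbrev Word := List Bool

/-- `wpow w k` is the `k`-fold concatenation `w^k`. -/
def wpow (w : Word) (k : ℕ) : Word := (List.replicate k w).flatten

lemma wpow_succ (w : Word) (k : ℕ) : wpow w (k + 1) = w ++ wpow w k := by
  simp [wpow, List.replicate_succ]

section StandardSequence

variable {d : ℤ → ℕ} {s : ℤ → Word}

lemma exists_standard_eq_append_parity (hs1 : s (-1) = [true]) (hs0 : s 0 = [false])
    (hs : ∀ n : ℤ, 1 ≤ n → s n = wpow (s (n - 1)) (d n) ++ s (n - 2))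
    {N : ℤ} (hN : -1 ≤ N) : ∃ t : Word, s N = t ++ [decide (Odd N)] := by
  suffices h : ∀ M : ℤ, 0 ≤ M → (∃ t : Word, s (M - 1) = t ++ [decide (Odd (M - 1))]) ∧
      ∃ t : Word, s M = t ++ [decide (Odd M)] by
    obtain ⟨h, -⟩ := h (N + 1) (by omega)
    simpa using h
  intro M hM
  induction M, hM using Int.leInduction with
  | base => exact ⟨⟨[], by simp [hs1]⟩, ⟨[], by simp [hs0]⟩⟩
  | succ M hM ih =>
    obtain ⟨⟨t, ht⟩, hM'⟩ := ih
    refine ⟨by simpa using hM', wpow (s M) (d (M + 1)) ++ t, ?_⟩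
    have hpar : Odd (M + 1) ↔ Odd (M - 1) := by simp
    rw [hs (M + 1) (by omega), add_sub_cancel_right, show M + 1 - 2 = M - 1 by ring, ht,
      List.append_assoc]
    simp only [hpar]

lemma dropLast_standard_add_one (hd : ∀ n : ℤ, 1 ≤ n → 1 ≤ d n)
    (hs1 : s (-1) = [true]) (hs0 : s 0 = [false])
    (hs : ∀ n : ℤ, 1 ≤ n → s n = wpow (s (n - 1)) (d n) ++ s (n - 2))
    {N : ℤ} (hN : 0 ≤ N) :
    (s (N + 1)).dropLast = (s N).dropLast ++
      ((if Odd (N - 1) then [false] else [true]) ++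
        (wpow (s N) (d (N + 1) - 1) ++ s (N - 1)).dropLast) := by
  obtain ⟨t, ht⟩ := exists_standard_eq_append_parity hs1 hs0 hs (N := N) (by omega)
  obtain ⟨t', ht'⟩ := exists_standard_eq_append_parity hs1 hs0 hs (N := N - 1) (by omega)
  have hne : s (N - 1) ≠ [] := by simp [ht']
  have hd' := hd (N + 1) (by omega)
  obtain ⟨k, hk⟩ : ∃ k, d (N + 1) = k + 1 := ⟨d (N + 1) - 1, by omega⟩
  have hletter : (if Odd (N - 1) then [false] else [true]) = [decide (Odd N)] := by
    by_cases h : Odd N <;> simp [h]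
  rw [hs (N + 1) (by omega), add_sub_cancel_right, show N + 1 - 2 = N - 1 by ring,
    List.dropLast_append_of_ne_nil hne, List.dropLast_append_of_ne_nil hne, hk, wpow_succ,
    Nat.add_sub_cancel, hletter, ht, List.dropLast_concat]
  simp

lemma dropLast_standard_eq_flatten (hd : ∀ n : ℤ, 1 ≤ n → 1 ≤ d n)
    (hs1 : s (-1) = [true]) (hs0 : s 0 = [false])
    (hs : ∀ n : ℤ, 1 ≤ n → s n = wpow (s (n - 1)) (d n) ++ s (n - 2))
    {v : ℤ → Word}
    (hv : ∀ n : ℤ, -1 ≤ n → v n = (if Odd n then [false] else [true]) ++ (wpow (s (n + 1)) (d (n + 2) - 1) ++ s n).dropLast)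
    (n : ℕ) : (s n).dropLast = ((List.range n).map fun i => v ((i : ℤ) - 1)).flatten := by
  induction n with
  | zero => simp [hs0]
  | succ n ih =>
    have hvn := hv (n - 1) (by omega)
    rw [sub_add_cancel, show (n : ℤ) - 1 + 2 = n + 1 by ring] at hvn
    rw [Nat.cast_succ, dropLast_standard_add_one hd hs1 hs0 hs (by omega), ih, ← hvn,
      List.range_succ]
    simp

end StandardSequence

theorem singular_word_as_product_general (d : ℤ → ℕ) (s : ℤ → Word)
    (hd : ∀ n : ℤ, 1 ≤ n → 1 ≤ d n)
    (hs1 : s (-1) = [true]) (hs0 : s 0 = [false])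
    (hs : ∀ n : ℤ, 1 ≤ n → s n = wpow (s (n - 1)) (d n) ++ s (n - 2))
    (w : ℤ → Word)
    (hw : ∀ n : ℤ, 0 ≤ n → w n = (if Odd n then [false] else [true]) ++ (s n).dropLast)
    (v : ℤ → Word)
    (hv : ∀ n : ℤ, -1 ≤ n → v n = (if Odd n then [false] else [true]) ++ (wpow (s (n + 1)) (d (n + 2) - 1) ++ s n).dropLast) :
    ∀ n : ℕ, w ((n : ℤ) + 1) =
      (if Odd ((n : ℤ) + 1) then [false] else [true]) ++
        ((List.range (n + 1)).map fun i => v ((i : ℤ) - 1)).flatten := by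
  intro n
  rw [hw _ (by omega), ← dropLast_standard_eq_flatten hd hs1 hs0 hs hv (n + 1), Nat.cast_succ]

/-- For all `n ≥ 0`, `wₙ₊₁ = y · v₋₁ v₀ v₁ ⋯ vₙ₋₁`, where `y` is the first letter
of `wₙ₊₁` (`a` if `n+1` is odd, `b` if `n+1` is even). -/
theorem singular_word_as_product (d : ℤ → ℕ) (s : ℤ → Word)
    (hd : ∀ n : ℤ, 1 ≤ n → 1 ≤ d n)
    (hs1 : s (-1) = [true]) (hs0 : s 0 = [false])
    (hs : ∀ n : ℤ, 1 ≤ n → s n = wpow (s (n - 1)) (d n) ++ s (n - 2))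
    (w : ℤ → Word)
    (hw : ∀ n : ℤ, 0 ≤ n → w n = (if Odd n then [false] else [true]) ++ (s n).dropLast)
    (hwm1 : w (-1) = [false]) (hwm2 : w (-2) = [])
    (v : ℤ → Word)
    (hv : ∀ n : ℤ, -1 ≤ n → v n = (if Odd n then [false] else [true]) ++ (wpow (s (n + 1)) (d (n + 2) - 1) ++ s n).dropLast)
    (hvm2 : v (-2) = []) :
    ∀ n : ℕ, w ((n : ℤ) + 1) =
      (if Odd ((n : ℤ) + 1) then [false] else [true]) ++
        ((List.range (n + 1)).map fun i => v ((i : ℤ) - 1)).flatten :=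
  singular_word_as_product_general d s hd hs1 hs0 hs w hw v hv
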